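/- For k-vectors λ and ℓ-vectors η in the exterior algebra of ℝ^m, if at least one of λ, η is a simple (decomposable) multivector, then |λ ∧ η|_{k+ℓ} ≤ |λ|_k |η|_ℓ. -/

import Mathlib

open Finset

/-- Coordinates of a `k`-vector in `Λ_k(ℝ^m)` with respect to the standard basis
`{e_α : α ∈ I(k,m)}`, indexed by `k`-element subsets of `Fin m`. -/
abbrev MultiVec (m k : ℕ) : Type := {s : Finset (Fin m) // s.card = k} → ℝ

noncomputable section

/-- Sign of the shuffle permutation sorting the concatenation of (sorted) `s`
followed by (sorted) `t`: `(-1)` to the number of inversions. -/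
def shuffleSign {m : ℕ} (s t : Finset (Fin m)) : ℝ :=
  (-1 : ℝ) ^ (∑ i ∈ s, (t.filter (fun j => j < i)).card)

/-- Identity cast between spaces of multivectors of equal degree. -/
def MultiVec.cast {m k l : ℕ} (h : k = l) (a : MultiVec m k) : MultiVec m l :=
  fun t => a ⟨t.1, t.2.trans h.symm⟩

/-- Exterior (wedge) product of multivectors, in coordinates. -/
def wedge {m k l : ℕ} (a : MultiVec m k) (b : MultiVec m l) : MultiVec m (k + l) :=
  fun t => ∑ s ∈ ((t : Finset (Fin m)).powersetCard k).attach,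
    shuffleSign s.1 (t.1 \ s.1) *
      a ⟨s.1, (Finset.mem_powersetCard.mp s.2).2⟩ *
      b ⟨t.1 \ s.1, by
        have h := Finset.mem_powersetCard.mp s.2
        rw [Finset.card_sdiff, Finset.inter_eq_left.mpr h.1, t.2, h.2]; omega⟩

/-- The Hodge star operator `* : Λ_k(ℝ^m) → Λ_{m−k}(ℝ^m)`, defined on the standard
basis by `*(e_α) = ±e_{αᶜ}` with the sign of the corresponding permutation of
`(1,…,m)` (so that positive permutations get sign `+1`). -/
def hodge {m k : ℕ} (hk : k ≤ m) (a : MultiVec m k) : MultiVec m (m - k) :=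
  fun t => shuffleSign t.1ᶜ t.1 * a ⟨t.1ᶜ, by
    rw [Finset.card_compl, Fintype.card_fin, t.2]; omega⟩

/-- A vector of `ℝ^m` regarded as a `1`-vector. -/
def vec1 {m : ℕ} (v : Fin m → ℝ) : MultiVec m 1 := fun t => ∑ i ∈ t.1, v i

/-- Euclidean inner product on `ℝ^m`. -/
def dotv {m : ℕ} (a b : Fin m → ℝ) : ℝ := ∑ i, a i * b i

/-- Norm of a `k`-vector induced by the inner product
`⟨λ₁∧⋯∧λ_k, μ₁∧⋯∧μ_k⟩ = det(⟨λ_i,μ_j⟩)`, which in the standard orthonormal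
coordinates is `(Σ_α λ_α²)^{1/2}`. -/
def mnorm {m k : ℕ} (a : MultiVec m k) : ℝ := Real.sqrt (∑ t, (a t) ^ 2)

/-- Iterated wedge `u₁ ∧ ⋯ ∧ u_k` of a family of vectors. -/
def wedgeFamily {m : ℕ} : (k : ℕ) → (Fin k → (Fin m → ℝ)) → MultiVec m k
  | 0, _ => fun _ => 1
  | (k + 1), u =>
      MultiVec.cast (Nat.add_comm 1 k)
        (wedge (vec1 (u 0)) (wedgeFamily k (fun i => u i.succ)))

/-- A multivector is simple (decomposable) if it is a wedge of vectors. -/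
def IsSimple {m k : ℕ} (a : MultiVec m k) : Prop :=
  ∃ u : Fin k → (Fin m → ℝ), a = wedgeFamily k u

end

/-!
Work in the full exterior algebra `Λ(ℝ^m)` with its orthonormal basis `e_s`, and let `ε_v` be left
multiplication by a vector `v` and `ι_v` its adjoint, the contraction. The Clifford relation
`ι_v ε_w + ε_w ι_v = ⟨v, w⟩` gives `|ε_v g|² + |ι_v g|² = |v|² |g|²`, so `|v ∧ g| ≤ |v| |g|`, with
equality when `ι_v g = 0`.

For a simple `k`-vector `u₀ ∧ S` with `S = u₁ ∧ ⋯ ∧ u_{k-1}`, `u₀` may be replaced by its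
component `w` orthogonal to `u₁, …, u_{k-1}`, because `u_j ∧ S = 0`. Then `ι_w S = 0`, so
`|w ∧ S| = |w| |S|`, while `|w ∧ S ∧ η| ≤ |w| |S ∧ η| ≤ |w| |S| |η|` by induction on `k`. The case
of a simple right factor follows from `λ ∧ η = ± η ∧ λ`.
-/

lemma dotProduct_self_nonneg {n : Type*} [Fintype n] (v : n → ℝ) : 0 ≤ v ⬝ᵥ v :=
  Fintype.sum_nonneg fun i => mul_self_nonneg (v i)

lemma exists_dotProduct_eq_zero_sub_mem_span {n ι : Type*} [Fintype n] (u : ι → n → ℝ)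
    (v : n → ℝ) : ∃ w : n → ℝ, (∀ i, w ⬝ᵥ u i = 0) ∧ v - w ∈ Submodule.span ℝ (Set.range u) := by
  let e := (EuclideanSpace.equiv n ℝ).toLinearEquiv
  let K := (Submodule.span ℝ (Set.range u)).map e.symm.toLinearMap
  obtain ⟨y, hy, z, hz, hv⟩ := K.exists_add_mem_mem_orthogonal (e.symm v)
  refine ⟨e z, fun i => ?_, ?_⟩
  · have hui : e.symm (u i) ∈ K := Submodule.mem_map_of_mem (Submodule.subset_span ⟨i, rfl⟩)
    show z.ofLp ⬝ᵥ u i = 0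
    simpa [EuclideanSpace.inner_eq_star_dotProduct, e] using
      (Submodule.mem_orthogonal K z).mp hz _ hui
  · have hvw : v - e z = e y := by
      rw [← e.apply_symm_apply v, hv, map_add, add_sub_cancel_right]
    obtain ⟨x, hx, rfl⟩ := Submodule.mem_map.mp hy
    simpa [hvw] using hx

namespace Finset

variable {α β : Type*} [DecidableEq α] [AddCommMonoid β]

lemma sum_sum_erase_comm (t : Finset α) (F : α → α → β) :
    ∑ i ∈ t, ∑ j ∈ t.erase i, F i j = ∑ j ∈ t, ∑ i ∈ t.erase j, F i j :=
  sum_comm' fun i j => by simp only [mem_erase]; tauto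

lemma sum_sum_mem_eq_sum_sum_compl_insert [Fintype α] (F : Finset α → α → β) :
    ∑ t, ∑ i ∈ t, F t i = ∑ r, ∑ i ∈ rᶜ, F (insert i r) i := by
  rw [sum_sigma', sum_sigma']
  refine sum_nbij' (fun x => ⟨x.1.erase x.2, x.2⟩) (fun y => ⟨insert y.2 y.1, y.2⟩)
    ?_ ?_ ?_ ?_ ?_ <;> simp +contextual [insert_erase]

lemma sum_powerset_sum_mem_eq_sum_sum_insert (t : Finset α) (F : Finset α → α → β) :
    ∑ s ∈ t.powerset, ∑ i ∈ s, F s i = ∑ i ∈ t, ∑ s ∈ (t.erase i).powerset, F (insert i s) i := by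
  rw [sum_sigma', sum_sigma']
  refine sum_nbij' (fun x => ⟨x.2, x.1.erase x.2⟩) (fun y => ⟨insert y.1 y.2, y.1⟩)
    ?_ ?_ ?_ ?_ ?_ <;> simp +contextual [insert_erase, subset_iff]
  rintro ⟨i, s⟩ - hs
  simp [erase_eq_of_notMem fun h => (hs h).1 rfl]

end Finset

section

variable {m : ℕ}

lemma shuffleSign_mul_self (s t : Finset (Fin m)) : shuffleSign s t * shuffleSign s t = 1 := by
  rw [shuffleSign, ← pow_add, ← two_mul, pow_mul]
  norm_num

lemma shuffleSign_union_left {s t : Finset (Fin m)} (h : Disjoint s t) (r : Finset (Fin m)) :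
    shuffleSign (s ∪ t) r = shuffleSign s r * shuffleSign t r := by
  rw [shuffleSign, shuffleSign, shuffleSign, ← pow_add, sum_union h]

lemma shuffleSign_union_right (s : Finset (Fin m)) {t r : Finset (Fin m)} (h : Disjoint t r) :
    shuffleSign s (t ∪ r) = shuffleSign s t * shuffleSign s r := by
  simp only [shuffleSign, ← pow_add, ← sum_add_distrib, filter_union,
    card_union_of_disjoint (disjoint_filter_filter h)]

lemma shuffleSign_insert_left {i : Fin m} {s : Finset (Fin m)} (h : i ∉ s) (r : Finset (Fin m)) :
    shuffleSign (insert i s) r = shuffleSign {i} r * shuffleSign s r := by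
  rw [insert_eq, shuffleSign_union_left (disjoint_singleton_left.mpr h)]

lemma shuffleSign_insert_right (s : Finset (Fin m)) {j : Fin m} {r : Finset (Fin m)} (h : j ∉ r) :
    shuffleSign s (insert j r) = shuffleSign s {j} * shuffleSign s r := by
  rw [insert_eq, shuffleSign_union_right s (disjoint_singleton_left.mpr h)]

lemma shuffleSign_empty_left (t : Finset (Fin m)) : shuffleSign ∅ t = 1 := by
  simp [shuffleSign]

lemma shuffleSign_mul_shuffleSign_swap {s t : Finset (Fin m)} (h : Disjoint s t) :
    shuffleSign s t * shuffleSign t s = (-1) ^ (#s * #t) := by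
  rw [shuffleSign, shuffleSign, ← pow_add]
  congr 1
  -- each pair `(i, j) ∈ s × t` is counted exactly once, as `j < i` or as `i < j`
  have hpair : ∀ i ∈ s, ∀ j ∈ t, (if j < i then 1 else 0) + (if i < j then 1 else 0) = 1 := by
    intro i hi j hj
    rcases lt_trichotomy i j with hij | rfl | hij
    · simp [hij, hij.not_gt]
    · exact absurd hj (disjoint_left.mp h hi)
    · simp [hij, hij.not_gt]
  simp only [card_filter]
  rw [sum_comm (s := t), ← sum_add_distrib]
  simp_rw [← sum_add_distrib]
  rw [sum_congr rfl fun i hi => sum_congr rfl (hpair i hi)]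
  simp

lemma shuffleSign_singleton_swap {i j : Fin m} (h : i ≠ j) :
    shuffleSign {i} {j} = -shuffleSign {j} {i} := by
  have hswap := shuffleSign_mul_shuffleSign_swap (disjoint_singleton.mpr h)
  rw [card_singleton, card_singleton, one_mul, pow_one] at hswap
  linear_combination
    shuffleSign {j} {i} * hswap - shuffleSign {i} {j} * shuffleSign_mul_self {j} {i}

lemma shuffleSign_erase_erase_swap {i j : Fin m} {t : Finset (Fin m)} (hi : i ∈ t) (hj : j ∈ t)
    (hij : i ≠ j) :
    shuffleSign {i} (t.erase i) * shuffleSign {j} ((t.erase i).erase j) =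
      -(shuffleSign {j} (t.erase j) * shuffleSign {i} ((t.erase j).erase i)) := by
  rw [erase_right_comm (a := j)]
  set r := (t.erase i).erase j
  have hir : i ∉ r := by simp [r]
  have hjr : j ∉ r := by simp [r]
  have hti : t.erase i = insert j r := (insert_erase (mem_erase.mpr ⟨hij.symm, hj⟩)).symm
  have htj : t.erase j = insert i r := by
    rw [show r = (t.erase j).erase i from erase_right_comm,
      insert_erase (mem_erase.mpr ⟨hij, hi⟩)]
  rw [hti, htj, shuffleSign_insert_right _ hjr, shuffleSign_insert_right _ hir,
    shuffleSign_singleton_swap hij]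
  ring

/-- Coordinates of an element of the full exterior algebra `Λ(ℝ^m) = ⨁ₖ Λ_k(ℝ^m)`: the value at
`s` is the coefficient of `e_s`, whatever the size of `s`. -/
abbrev ExtCoord (m : ℕ) : Type := Finset (Fin m) → ℝ

noncomputable def MultiVec.toExt {k : ℕ} (a : MultiVec m k) : ExtCoord m :=
  fun s => if h : #s = k then a ⟨s, h⟩ else 0

noncomputable def extWedge (f g : ExtCoord m) : ExtCoord m :=
  fun t => ∑ s ∈ t.powerset, shuffleSign s (t \ s) * f s * g (t \ s)

noncomputable def vecWedge : (Fin m → ℝ) →ₗ[ℝ] ExtCoord m →ₗ[ℝ] ExtCoord m :=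
  LinearMap.mk₂ ℝ (fun v g t => ∑ i ∈ t, shuffleSign {i} (t.erase i) * v i * g (t.erase i))
    (fun _ _ _ => by ext; simp only [Pi.add_apply, mul_add, add_mul, sum_add_distrib])
    (fun _ _ _ => by ext; simp only [Pi.smul_apply, smul_eq_mul, mul_sum]; ac_rfl)
    (fun _ _ _ => by ext; simp only [Pi.add_apply, mul_add, sum_add_distrib])
    (fun _ _ _ => by ext; simp only [Pi.smul_apply, smul_eq_mul, mul_sum]; ac_rfl)

lemma vecWedge_apply (v : Fin m → ℝ) (g : ExtCoord m) (t : Finset (Fin m)) :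
    vecWedge v g t = ∑ i ∈ t, shuffleSign {i} (t.erase i) * v i * g (t.erase i) := rfl

noncomputable def vecContract (v : Fin m → ℝ) (g : ExtCoord m) : ExtCoord m :=
  fun r => ∑ i ∈ rᶜ, shuffleSign {i} r * v i * g (insert i r)

lemma vecWedge_vecWedge_apply (v w : Fin m → ℝ) (g : ExtCoord m) (t : Finset (Fin m)) :
    vecWedge v (vecWedge w g) t = ∑ i ∈ t, ∑ j ∈ t.erase i,
      shuffleSign {i} (t.erase i) * shuffleSign {j} ((t.erase i).erase j) * v i * w j *
        g ((t.erase i).erase j) := by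
  simp only [vecWedge_apply, mul_sum]
  exact sum_congr rfl fun _ _ => sum_congr rfl fun _ _ => by ring

lemma vecWedge_comm (v w : Fin m → ℝ) (g : ExtCoord m) :
    vecWedge v (vecWedge w g) = -vecWedge w (vecWedge v g) := by
  ext t
  rw [Pi.neg_apply, vecWedge_vecWedge_apply, vecWedge_vecWedge_apply, sum_sum_erase_comm,
    ← sum_neg_distrib]
  refine sum_congr rfl fun j hj => ?_
  rw [← sum_neg_distrib]
  refine sum_congr rfl fun i hi => ?_
  obtain ⟨hij, hi⟩ := mem_erase.mp hi
  rw [shuffleSign_erase_erase_swap hi hj hij, erase_right_comm]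
  ring

lemma vecWedge_self (v : Fin m → ℝ) (g : ExtCoord m) : vecWedge v (vecWedge v g) = 0 := by
  have h := vecWedge_comm v v g
  rwa [eq_neg_iff_add_eq_zero, ← two_smul ℝ, smul_eq_zero, or_iff_right two_ne_zero] at h

lemma vecContract_vecWedge_apply (v w : Fin m → ℝ) (g : ExtCoord m) (t : Finset (Fin m)) :
    vecContract v (vecWedge w g) t = ∑ j ∈ tᶜ, v j * w j * g t + ∑ j ∈ tᶜ, ∑ i ∈ t,
      shuffleSign {j} t * shuffleSign {i} (insert j (t.erase i)) * v j * w i *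
        g (insert j (t.erase i)) := by
  rw [← sum_add_distrib]
  refine sum_congr rfl fun j hj => ?_
  have hjt : j ∉ t := mem_compl.mp hj
  rw [vecWedge_apply, sum_insert hjt, erase_insert hjt, mul_add, mul_sum]
  congr 1
  · linear_combination v j * w j * g t * shuffleSign_mul_self {j} t
  · refine sum_congr rfl fun i hi => ?_
    rw [erase_insert_of_ne fun h : j = i => hjt (h ▸ hi)]
    ring

lemma vecWedge_vecContract_apply (v w : Fin m → ℝ) (g : ExtCoord m) (t : Finset (Fin m)) :
    vecWedge w (vecContract v g) t = ∑ i ∈ t, v i * w i * g t + ∑ i ∈ t, ∑ j ∈ tᶜ,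
      shuffleSign {i} (t.erase i) * shuffleSign {j} (t.erase i) * v j * w i *
        g (insert j (t.erase i)) := by
  rw [vecWedge_apply, ← sum_add_distrib]
  refine sum_congr rfl fun i hi => ?_
  have hic : i ∉ tᶜ := by simpa using hi
  rw [vecContract, compl_erase, sum_insert hic, insert_erase hi, mul_add, mul_sum]
  congr 1
  · linear_combination v i * w i * g t * shuffleSign_mul_self {i} (t.erase i)
  · exact sum_congr rfl fun _ _ => by ring

lemma vecContract_vecWedge_add_vecWedge_vecContract (v w : Fin m → ℝ) (g : ExtCoord m) :
    vecContract v (vecWedge w g) + vecWedge w (vecContract v g) = (v ⬝ᵥ w) • g := by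
  ext t
  have hcross : ∀ i ∈ t, ∀ j ∈ tᶜ,
      shuffleSign {j} t * shuffleSign {i} (insert j (t.erase i)) =
        -(shuffleSign {i} (t.erase i) * shuffleSign {j} (t.erase i)) := by
    intro i hi j hj
    have hjt : j ∉ t := mem_compl.mp hj
    have hsplit : shuffleSign {j} t = shuffleSign {j} {i} * shuffleSign {j} (t.erase i) := by
      conv_lhs => rw [← insert_erase hi]
      exact shuffleSign_insert_right _ (notMem_erase i t)
    rw [hsplit, shuffleSign_insert_right _ fun h => hjt (mem_of_mem_erase h),
      shuffleSign_singleton_swap fun h : i = j => hjt (h ▸ hi)]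
    linear_combination -(shuffleSign {i} (t.erase i) * shuffleSign {j} (t.erase i)) *
      shuffleSign_mul_self {j} {i}
  rw [Pi.add_apply, vecContract_vecWedge_apply, vecWedge_vecContract_apply, sum_comm (s := t),
    Pi.smul_apply, smul_eq_mul, dotProduct, sum_mul, ← sum_add_sum_compl t]
  have hcancel : ∑ j ∈ tᶜ, ∑ i ∈ t,
      (shuffleSign {j} t * shuffleSign {i} (insert j (t.erase i)) * v j * w i *
        g (insert j (t.erase i)) +
      shuffleSign {i} (t.erase i) * shuffleSign {j} (t.erase i) * v j * w i *
        g (insert j (t.erase i))) = 0 :=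
    sum_eq_zero fun j hj => sum_eq_zero fun i hi => by rw [hcross i hi j hj]; ring
  simp only [sum_add_distrib] at hcancel
  linear_combination hcancel

lemma vecWedge_dotProduct (v : Fin m → ℝ) (g h : ExtCoord m) :
    vecWedge v g ⬝ᵥ h = g ⬝ᵥ vecContract v h := by
  simp only [dotProduct, vecWedge_apply, vecContract, sum_mul, mul_sum]
  rw [sum_sum_mem_eq_sum_sum_compl_insert]
  refine sum_congr rfl fun r _ => sum_congr rfl fun i hi => ?_
  rw [erase_insert (mem_compl.mp hi)]
  ring

lemma vecWedge_dotProduct_self_add (v : Fin m → ℝ) (g : ExtCoord m) :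
    vecWedge v g ⬝ᵥ vecWedge v g + vecContract v g ⬝ᵥ vecContract v g = (v ⬝ᵥ v) * (g ⬝ᵥ g) := by
  have hclifford := congrArg (g ⬝ᵥ ·) (vecContract_vecWedge_add_vecWedge_vecContract v v g)
  simp only [dotProduct_add, dotProduct_smul, smul_eq_mul] at hclifford
  have hww := vecWedge_dotProduct v g (vecWedge v g)
  have hcc := vecWedge_dotProduct v (vecContract v g) g
  rw [dotProduct_comm] at hcc
  linarith

lemma vecWedge_dotProduct_self_le (v : Fin m → ℝ) (g : ExtCoord m) :
    vecWedge v g ⬝ᵥ vecWedge v g ≤ (v ⬝ᵥ v) * (g ⬝ᵥ g) := by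
  linarith [vecWedge_dotProduct_self_add v g, dotProduct_self_nonneg (vecContract v g)]

lemma vecWedge_dotProduct_self_of_vecContract_eq_zero {v : Fin m → ℝ} {g : ExtCoord m}
    (h : vecContract v g = 0) : vecWedge v g ⬝ᵥ vecWedge v g = (v ⬝ᵥ v) * (g ⬝ᵥ g) := by
  simpa [h] using vecWedge_dotProduct_self_add v g

lemma MultiVec.toExt_of_card {k : ℕ} (a : MultiVec m k) {s : Finset (Fin m)} (h : #s = k) :
    a.toExt s = a ⟨s, h⟩ := dif_pos h

lemma MultiVec.toExt_of_card_ne {k : ℕ} (a : MultiVec m k) {s : Finset (Fin m)} (h : #s ≠ k) :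
    a.toExt s = 0 := dif_neg h

lemma MultiVec.toExt_cast {k l : ℕ} (h : k = l) (a : MultiVec m k) :
    (MultiVec.cast h a).toExt = a.toExt := by
  subst h; rfl

lemma mnorm_eq_sqrt_toExt {k : ℕ} (a : MultiVec m k) : mnorm a = √(a.toExt ⬝ᵥ a.toExt) := by
  rw [mnorm, dotProduct, ← Fintype.sum_subtype_add_sum_subtype (#· = k),
    Fintype.sum_eq_zero (fun s : {s // ¬#s = k} => a.toExt s.1 * a.toExt s.1)
      fun s => by rw [a.toExt_of_card_ne s.2, mul_zero], add_zero]
  exact congrArg _ (sum_congr rfl fun s _ => by rw [a.toExt_of_card s.2, sq])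

lemma MultiVec.toExt_wedge {k l : ℕ} (a : MultiVec m k) (b : MultiVec m l) :
    (wedge a b).toExt = extWedge a.toExt b.toExt := by
  ext t
  by_cases ht : #t = k + l
  · have hsub : t.powersetCard k ⊆ t.powerset := fun s hs =>
      mem_powerset.mpr (mem_powersetCard.mp hs).1
    rw [(wedge a b).toExt_of_card ht, extWedge, ← sum_subset hsub fun s hs hsk => by
      rw [a.toExt_of_card_ne fun h => hsk (mem_powersetCard.mpr ⟨mem_powerset.mp hs, h⟩),
        mul_zero, zero_mul], ← sum_attach]
    refine sum_congr rfl fun s _ => ?_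
    obtain ⟨hst, hs⟩ := mem_powersetCard.mp s.2
    rw [a.toExt_of_card hs, b.toExt_of_card (by rw [card_sdiff_of_subset hst, ht, hs]; omega)]
  · rw [(wedge a b).toExt_of_card_ne ht]
    refine (sum_eq_zero fun s hs => ?_).symm
    have hst := mem_powerset.mp hs
    by_cases hs : #s = k
    · have hb : #(t \ s) ≠ l := fun hb => ht <| by
        rw [← hs, ← hb, card_sdiff_of_subset hst, Nat.add_sub_cancel' (card_le_card hst)]
      rw [b.toExt_of_card_ne hb, mul_zero]
    · rw [a.toExt_of_card_ne hs, mul_zero, zero_mul]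

lemma extWedge_toExt_vec1 (v : Fin m → ℝ) (g : ExtCoord m) :
    extWedge (vec1 v).toExt g = vecWedge v g := by
  ext t
  have hsub : t.powersetCard 1 ⊆ t.powerset := fun s hs =>
    mem_powerset.mpr (mem_powersetCard.mp hs).1
  rw [extWedge, ← sum_subset hsub fun s hs hs1 => by
      rw [(vec1 v).toExt_of_card_ne fun h => hs1 (mem_powersetCard.mpr ⟨mem_powerset.mp hs, h⟩),
        mul_zero, zero_mul],
    powersetCard_one, sum_map, vecWedge_apply]
  refine sum_congr rfl fun i _ => ?_
  simp only [Function.Embedding.coeFn_mk]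
  rw [(vec1 v).toExt_of_card (card_singleton i), sdiff_singleton_eq_erase]
  simp [vec1]

lemma extWedge_vecWedge (v : Fin m → ℝ) (f g : ExtCoord m) :
    extWedge (vecWedge v f) g = vecWedge v (extWedge f g) := by
  ext t
  simp only [extWedge, vecWedge_apply, mul_sum, sum_mul]
  rw [sum_powerset_sum_mem_eq_sum_sum_insert]
  refine sum_congr rfl fun i hi => sum_congr rfl fun s hs => ?_
  have hsub : s ⊆ t.erase i := mem_powerset.mp hs
  have his : i ∉ s := fun h => notMem_erase i t (hsub h)
  have hsd : t \ insert i s = t.erase i \ s := by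
    ext x; simp only [mem_sdiff, mem_insert, mem_erase]; tauto
  have hsplit :
      shuffleSign {i} (t.erase i) = shuffleSign {i} s * shuffleSign {i} (t.erase i \ s) := by
    conv_lhs => rw [← union_sdiff_of_subset hsub]
    exact shuffleSign_union_right _ disjoint_sdiff
  rw [erase_insert his, hsd, shuffleSign_insert_left his, hsplit]
  ring

lemma toExt_wedgeFamily_zero (u : Fin 0 → Fin m → ℝ) :
    (wedgeFamily 0 u).toExt = Pi.single ∅ 1 := by
  ext s
  by_cases hs : s = ∅
  · subst hs; rfl
  · rw [MultiVec.toExt_of_card_ne _ (card_ne_zero.mpr (nonempty_iff_ne_empty.mpr hs)),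
      Pi.single_eq_of_ne hs]

lemma toExt_wedgeFamily_succ {k : ℕ} (u : Fin (k + 1) → Fin m → ℝ) :
    (wedgeFamily (k + 1) u).toExt = vecWedge (u 0) (wedgeFamily k (fun i => u i.succ)).toExt := by
  rw [wedgeFamily, MultiVec.toExt_cast, MultiVec.toExt_wedge, extWedge_toExt_vec1]

lemma extWedge_single_empty (g : ExtCoord m) : extWedge (Pi.single ∅ 1) g = g := by
  ext t
  rw [extWedge, sum_eq_single_of_mem ∅ (empty_mem_powerset t) fun s _ hs => by
    rw [Pi.single_eq_of_ne hs, mul_zero, zero_mul]]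
  simp [shuffleSign_empty_left]

lemma vecWedge_toExt_wedgeFamily_self {k : ℕ} (u : Fin k → Fin m → ℝ) (j : Fin k) :
    vecWedge (u j) (wedgeFamily k u).toExt = 0 := by
  induction k with
  | zero => exact j.elim0
  | succ k ih =>
    rw [toExt_wedgeFamily_succ]
    induction j using Fin.cases with
    | zero => exact vecWedge_self _ _
    | succ i => rw [vecWedge_comm, ih (fun i => u i.succ) i, map_zero, neg_zero]

lemma vecWedge_toExt_wedgeFamily_of_mem_span {k : ℕ} (u : Fin k → Fin m → ℝ) {v : Fin m → ℝ}
    (hv : v ∈ Submodule.span ℝ (Set.range u)) : vecWedge v (wedgeFamily k u).toExt = 0 := by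
  suffices Submodule.span ℝ (Set.range u) ≤ LinearMap.ker (vecWedge.flip (wedgeFamily k u).toExt)
    from this hv
  exact Submodule.span_le.mpr <| Set.range_subset_iff.mpr (vecWedge_toExt_wedgeFamily_self u)

lemma vecContract_toExt_wedgeFamily {k : ℕ} (u : Fin k → Fin m → ℝ) {v : Fin m → ℝ}
    (hv : ∀ i, v ⬝ᵥ u i = 0) : vecContract v (wedgeFamily k u).toExt = 0 := by
  induction k with
  | zero =>
    ext r
    refine sum_eq_zero fun i _ => ?_
    rw [toExt_wedgeFamily_zero, Pi.single_eq_of_ne (insert_ne_empty i r), mul_zero]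
  | succ k ih =>
    have hclifford := vecContract_vecWedge_add_vecWedge_vecContract v (u 0)
      (wedgeFamily k (fun i => u i.succ)).toExt
    rwa [ih _ fun i => hv i.succ, map_zero, add_zero, hv 0, zero_smul,
      ← toExt_wedgeFamily_succ] at hclifford

lemma extWedge_toExt_wedgeFamily_dotProduct_self_le {k : ℕ} (u : Fin k → Fin m → ℝ)
    (g : ExtCoord m) :
    extWedge (wedgeFamily k u).toExt g ⬝ᵥ extWedge (wedgeFamily k u).toExt g ≤
      ((wedgeFamily k u).toExt ⬝ᵥ (wedgeFamily k u).toExt) * (g ⬝ᵥ g) := by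
  induction k generalizing g with
  | zero => simp [toExt_wedgeFamily_zero, extWedge_single_empty]
  | succ k ih =>
    set S := (wedgeFamily k (fun i => u i.succ)).toExt
    -- replace `u 0` by its component `w` orthogonal to the other vectors
    obtain ⟨w, hw, hvw⟩ :=
      exists_dotProduct_eq_zero_sub_mem_span (fun i : Fin k => u i.succ) (u 0)
    have hS : (wedgeFamily (k + 1) u).toExt = vecWedge w S := by
      rw [toExt_wedgeFamily_succ, ← sub_eq_zero, ← LinearMap.sub_apply, ← map_sub]
      exact vecWedge_toExt_wedgeFamily_of_mem_span _ hvw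
    rw [hS, vecWedge_dotProduct_self_of_vecContract_eq_zero (vecContract_toExt_wedgeFamily _ hw),
      extWedge_vecWedge]
    calc _ ≤ (w ⬝ᵥ w) * (extWedge S g ⬝ᵥ extWedge S g) := vecWedge_dotProduct_self_le w _
      _ ≤ (w ⬝ᵥ w) * ((S ⬝ᵥ S) * (g ⬝ᵥ g)) :=
          mul_le_mul_of_nonneg_left (ih _ g) (dotProduct_self_nonneg w)
      _ = _ := by ring

lemma extWedge_toExt_comm {k l : ℕ} (a : MultiVec m k) (b : MultiVec m l) :
    extWedge a.toExt b.toExt = (-1 : ℝ) ^ (k * l) • extWedge b.toExt a.toExt := by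
  ext t
  rw [Pi.smul_apply, smul_eq_mul, extWedge, extWedge, mul_sum]
  have hinv : ∀ s ∈ t.powerset, t \ (t \ s) = s := fun s hs =>
    Finset.sdiff_sdiff_eq_self (mem_powerset.mp hs)
  refine sum_nbij' (t \ ·) (t \ ·) (by simp) (by simp) hinv hinv fun s hs => ?_
  rw [hinv s hs]
  by_cases ha : #s = k
  · by_cases hb : #(t \ s) = l
    · have hswap := shuffleSign_mul_shuffleSign_swap (disjoint_sdiff : Disjoint s (t \ s))
      rw [ha, hb] at hswap
      linear_combination a.toExt s * b.toExt (t \ s) *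
        (shuffleSign (t \ s) s * hswap - shuffleSign s (t \ s) * shuffleSign_mul_self (t \ s) s)
    · rw [b.toExt_of_card_ne hb]; ring
  · rw [a.toExt_of_card_ne ha]; ring

lemma mnorm_wedge_comm {k l : ℕ} (a : MultiVec m k) (b : MultiVec m l) :
    mnorm (wedge a b) = mnorm (wedge b a) := by
  rw [mnorm_eq_sqrt_toExt, mnorm_eq_sqrt_toExt, MultiVec.toExt_wedge, MultiVec.toExt_wedge,
    extWedge_toExt_comm, smul_dotProduct, dotProduct_smul, smul_smul, ← pow_add, ← two_mul,
    pow_mul, neg_one_sq, one_pow, one_smul]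

lemma mnorm_wedge_le_of_isSimple_left {k l : ℕ} {a : MultiVec m k} (ha : IsSimple a)
    (b : MultiVec m l) : mnorm (wedge a b) ≤ mnorm a * mnorm b := by
  obtain ⟨u, rfl⟩ := ha
  rw [mnorm_eq_sqrt_toExt, mnorm_eq_sqrt_toExt, mnorm_eq_sqrt_toExt, MultiVec.toExt_wedge,
    ← Real.sqrt_mul (dotProduct_self_nonneg _)]
  exact Real.sqrt_le_sqrt (extWedge_toExt_wedgeFamily_dotProduct_self_le u _)

end

theorem stmt_9_general (m k l : ℕ)
    (lam : MultiVec m k) (eta : MultiVec m l)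
    (hs : IsSimple lam ∨ IsSimple eta) :
    mnorm (wedge lam eta) ≤ mnorm lam * mnorm eta := by
  rcases hs with hlam | heta
  · exact mnorm_wedge_le_of_isSimple_left hlam eta
  · rw [mnorm_wedge_comm, mul_comm]
    exact mnorm_wedge_le_of_isSimple_left heta lam

/-- If `λ ∈ Λ_k(ℝ^m)`, `η ∈ Λ_ℓ(ℝ^m)` and at least one of them is a simple
(decomposable) multivector, then `|λ ∧ η|_{k+ℓ} ≤ |λ|_k |η|_ℓ`. -/
theorem stmt_9 (m k l : ℕ) (hkl : k + l ≤ m)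
    (lam : MultiVec m k) (eta : MultiVec m l)
    (hs : IsSimple lam ∨ IsSimple eta) :
    mnorm (wedge lam eta) ≤ mnorm lam * mnorm eta :=
  stmt_9_general m k l lam eta hs
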